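/- Let λ be a compatible ◊₁-cone with vertex a commutative unital quantale (H, *, u). Then for every object C of 𝒞 and all a ∈ F(C), b₁, b₂ ∈ F'(C): (1) λ_C(a, b₁) * λ_C(a, b₂) = (b₁ = b₂) • λ_C(a, b₁); and (2) u = ⨆ x : F'(C), λ_C(a, x). -/

import Mathlib

/-!
Apply the `◊₁`-condition to the diagonal `X ⟶ X ⨯ X` and to `X ⟶ ⊤_ C`. Since `F'` preserves
binary products, the pair `(b₁, b₂)` is an element of `F'(X ⨯ X)`, and by (C1) its value at
`Δ(a)` is `λ(a, b₁) * λ(a, b₂)`; the `◊₁`-condition turns it into a supremum over the fibre of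
`F'(Δ)` above `(b₁, b₂)`, which is `{b₁}` when `b₁ = b₂` and empty otherwise. Likewise
`F'(⊤_ C)` is a singleton, so the fibre of `F'(X ⟶ ⊤_ C)` is all of `F'(X)`, while (C2) says
that the value there is `1`.
-/

open CategoryTheory CategoryTheory.Limits

universe v u w w'

section ProductPreserving

variable {C : Type u} [Category.{v} C] (G : C ⥤ Type w)

theorem bijective_map_fst_map_snd (X Y : C) [HasBinaryProduct X Y]
    [PreservesLimit (pair X Y) G] :
    Function.Bijective fun z : G.obj (X ⨯ Y) => (G.map prod.fst z, G.map prod.snd z) := by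
  let e := PreservesLimitPair.iso G X Y ≪≫ Types.binaryProductIso (G.obj X) (G.obj Y)
  convert (isIso_iff_bijective e.hom).mp inferInstance using 1
  funext z
  ext
  · exact (ConcreteCategory.congr_hom (prodComparison_fst G X Y) z).symm
  · exact (ConcreteCategory.congr_hom (prodComparison_snd G X Y) z).symm

@[simp]
theorem map_fst_map_diag (X : C) [HasBinaryProduct X X] (y : G.obj X) :
    G.map prod.fst (G.map (diag X) y) = y := by
  rw [← G.map_comp_apply, prod.lift_fst, G.map_id]
  rfl

@[simp]
theorem map_snd_map_diag (X : C) [HasBinaryProduct X X] (y : G.obj X) :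
    G.map prod.snd (G.map (diag X) y) = y := by
  rw [← G.map_comp_apply, prod.lift_snd, G.map_id]
  rfl

theorem map_diag_eq_iff (X : C) [HasBinaryProduct X X] [PreservesLimit (pair X X) G]
    (y : G.obj X) (z : G.obj (X ⨯ X)) :
    G.map (diag X) y = z ↔ y = G.map prod.fst z ∧ y = G.map prod.snd z := by
  rw [← (bijective_map_fst_map_snd G X X).injective.eq_iff]
  simp

end ProductPreserving

section Cone

variable {H : Type w'} {C : Type u} [Category.{v} C] {F F' : C ⥤ Type w}

def IsDiamond₁Cone [SupSet H] (lam : ∀ X : C, F.obj X → F'.obj X → H) : Prop :=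
  ∀ {X Y : C} (f : X ⟶ Y) (a : F.obj X) (b' : F'.obj Y),
    lam Y (F.map f a) b' = ⨆ y : F'.obj X, ⨆ (_ : F'.map f y = b'), lam X a y

def IsCompatibleProd [Mul H] [HasBinaryProducts C] (lam : ∀ X : C, F.obj X → F'.obj X → H) :
    Prop :=
  ∀ (X Y : C) (z : F.obj (X ⨯ Y)) (z' : F'.obj (X ⨯ Y)),
    lam (X ⨯ Y) z z' =
      lam X (F.map prod.fst z) (F'.map prod.fst z') * lam Y (F.map prod.snd z) (F'.map prod.snd z')

def IsCompatibleTerminal [One H] [HasTerminal C] (lam : ∀ X : C, F.obj X → F'.obj X → H) :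
    Prop :=
  ∀ (z : F.obj (⊤_ C)) (z' : F'.obj (⊤_ C)), lam (⊤_ C) z z' = 1

variable [CompleteLattice H] {lam : ∀ X : C, F.obj X → F'.obj X → H}

theorem IsDiamond₁Cone.mul_eq_iSup_eq [Mul H] [HasBinaryProducts C] (hlam : IsDiamond₁Cone lam)
    (hprod : IsCompatibleProd lam) (X : C) [PreservesLimit (pair X X) F'] (a : F.obj X)
    (b₁ b₂ : F'.obj X) :
    lam X a b₁ * lam X a b₂ = ⨆ (_ : b₁ = b₂), lam X a b₁ := by
  obtain ⟨z', hz'⟩ := (bijective_map_fst_map_snd F' X X).surjective (b₁, b₂)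
  obtain ⟨rfl, rfl⟩ := Prod.mk.inj hz'
  calc lam X a (F'.map prod.fst z') * lam X a (F'.map prod.snd z')
      = lam (X ⨯ X) (F.map (diag X) a) z' := by
        rw [hprod, map_fst_map_diag, map_snd_map_diag]
    _ = ⨆ y, ⨆ (_ : F'.map (diag X) y = z'), lam X a y := hlam _ _ _
    _ = ⨆ y, ⨆ (_ : y = F'.map prod.fst z' ∧ y = F'.map prod.snd z'), lam X a y := by
        simp_rw [map_diag_eq_iff]
    _ = _ := by simp_rw [iSup_and, iSup_iSup_eq_left]

theorem IsDiamond₁Cone.one_eq_iSup [One H] [HasTerminal C]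
    [PreservesLimit (Functor.empty.{0} C) F'] (hlam : IsDiamond₁Cone lam)
    (hterm : IsCompatibleTerminal lam) (X : C) (a : F.obj X) :
    1 = ⨆ x : F'.obj X, lam X a x := by
  let : Unique (F'.obj (⊤_ C)) :=
    Types.isTerminalEquivUnique _ (isLimitOfHasTerminalOfPreservesLimit F')
  calc 1 = lam (⊤_ C) (F.map (terminal.from X) a) default := (hterm _ _).symm
    _ = ⨆ y, ⨆ (_ : F'.map (terminal.from X) y = default), lam X a y := hlam _ _ _
    _ = ⨆ y, lam X a y := by simp only [Unique.eq_default, iSup_pos]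

end Cone

theorem compatible_diamond₁_cone_key_equations_general
    {H : Type w} [CompleteLattice H] [CommMonoid H]
    {C : Type u} [Category.{v} C] [HasTerminal C] [HasBinaryProducts C]
    (F F' : C ⥤ Type w)
    [PreservesFiniteProducts F']
    (lam : ∀ X : C, F.obj X → F'.obj X → H)
    -- ◊₁-cone
    (hdiam₁ : ∀ {X Y : C} (f : X ⟶ Y) (a : F.obj X) (b' : F'.obj Y),
      lam Y (F.map f a) b' = ⨆ y : F'.obj X, ⨆ (_ : F'.map f y = b'), lam X a y)
    -- compatibility (C1)
    (hC1 : ∀ (X Y : C) (z : F.obj (X ⨯ Y)) (z' : F'.obj (X ⨯ Y)),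
      lam (X ⨯ Y) z z' =
        lam X (F.map Limits.prod.fst z) (F'.map Limits.prod.fst z') *
          lam Y (F.map Limits.prod.snd z) (F'.map Limits.prod.snd z'))
    -- compatibility (C2)
    (hC2 : ∀ (z : F.obj (⊤_ C)) (z' : F'.obj (⊤_ C)), lam (⊤_ C) z z' = 1) :
    (∀ (X : C) (a : F.obj X) (b₁ b₂ : F'.obj X),
      lam X a b₁ * lam X a b₂ = ⨆ (_ : b₁ = b₂), lam X a b₁) ∧
    (∀ (X : C) (a : F.obj X), (1 : H) = ⨆ x : F'.obj X, lam X a x) :=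
  ⟨fun X => IsDiamond₁Cone.mul_eq_iSup_eq hdiam₁ hC1 X, IsDiamond₁Cone.one_eq_iSup hdiam₁ hC2⟩

/-- Let `λ` be a compatible `◊₁`-cone with vertex a commutative unital quantale
`(H, *, 1)`.  Then for every object `C` of `𝒞`, `a ∈ F(C)` and
`b₁, b₂ ∈ F'(C)`: (1) `λ_C(a, b₁) * λ_C(a, b₂) = (b₁ = b₂) • λ_C(a, b₁)`, and
(2) `1 = ⨆ x, λ_C(a, x)`. -/
theorem compatible_diamond₁_cone_key_equations
    {H : Type w} [CompleteLattice H] [CommMonoid H]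
    (mul_sSup : ∀ (a : H) (s : Set H), a * sSup s = ⨆ b ∈ s, a * b)
    (sSup_mul : ∀ (s : Set H) (a : H), sSup s * a = ⨆ b ∈ s, b * a)
    {C : Type u} [Category.{v} C] [HasTerminal C] [HasBinaryProducts C]
    (F F' : C ⥤ Type w)
    [PreservesFiniteProducts F] [PreservesFiniteProducts F']
    (lam : ∀ X : C, F.obj X → F'.obj X → H)
    -- ◊₁-cone
    (hdiam₁ : ∀ {X Y : C} (f : X ⟶ Y) (a : F.obj X) (b' : F'.obj Y),
      lam Y (F.map f a) b' = ⨆ y : F'.obj X, ⨆ (_ : F'.map f y = b'), lam X a y)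
    -- compatibility (C1)
    (hC1 : ∀ (X Y : C) (z : F.obj (X ⨯ Y)) (z' : F'.obj (X ⨯ Y)),
      lam (X ⨯ Y) z z' =
        lam X (F.map Limits.prod.fst z) (F'.map Limits.prod.fst z') *
          lam Y (F.map Limits.prod.snd z) (F'.map Limits.prod.snd z'))
    -- compatibility (C2)
    (hC2 : ∀ (z : F.obj (⊤_ C)) (z' : F'.obj (⊤_ C)), lam (⊤_ C) z z' = 1) :
    (∀ (X : C) (a : F.obj X) (b₁ b₂ : F'.obj X),
      lam X a b₁ * lam X a b₂ = ⨆ (_ : b₁ = b₂), lam X a b₁) ∧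
    (∀ (X : C) (a : F.obj X), (1 : H) = ⨆ x : F'.obj X, lam X a x) :=
  compatible_diamond₁_cone_key_equations_general F F' lam hdiam₁ hC1 hC2
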